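/- Let Γ be a group of polynomial growth of degree d with lim_{n→∞}|B(n)|/n^d = c_Γ > 0, and let δ ∈ (0,1). Then there exist integers n₀, r₀ > 2 depending only on Γ and δ such that: whenever 𝒞 is a finite collection of pairwise disjoint balls in Γ with all radii greater than n₀ and r ≥ r₀, one has |⊔_{W∈𝒞} W| ≥ (1−δ)|⋃_{W∈𝒞} (1 + 4/(r−2))·W|. -/

import Mathlib

/-!
A ball of the right word metric is a right translate of a ball about `1`, and the word norm is
integer valued, so `|B(x, s)| = |B(⌊s⌋)|`. Pansu's asymptotics `|B(n)| ~ c nᵈ` make `|B(t)| / tᵈ`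
converge along real `t`, hence for large `s` and `s ≤ t ≤ (1 + ε) s` one has
`(1 - δ) |B(t)| ≤ |B(s)|`. Once `r` is large, `1 + 4 / (r - 2) ≤ 1 + ε`, so each enlarged ball loses
at most a `δ`-fraction; summing over the disjoint balls and bounding the union of the enlargements
by the sum of their sizes gives the claim.
-/

open Filter MeasureTheory Function Set
open scoped BigOperators

variable {Γ : Type*} [Group Γ]

/-- The word norm associated to a finite generating set `S`:
the infimum of `Σ |pᵢ|` over all representations `γ = s₁^{p₁} ⋯ s_l^{p_l}` with `sᵢ ∈ S`. -/
noncomputable def wordNorm (S : Finset Γ) (γ : Γ) : ℕ :=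
  sInf {n | ∃ l : List (Γ × ℤ), (∀ p ∈ l, p.1 ∈ S) ∧
    (l.map fun p => p.1 ^ p.2).prod = γ ∧ (l.map fun p => p.2.natAbs).sum = n}

/-- Closed ball of radius `r` around `x` for the right word metric `d_R(x,y) = ‖x y⁻¹‖`. -/
def wordBall (S : Finset Γ) (x : Γ) (r : ℝ) : Set Γ :=
  {y | (wordNorm S (x * y⁻¹) : ℝ) ≤ r}

open scoped Pointwise Topology

lemma zpow_mem_union_inv_pow_natAbs {s : Set Γ} {x : Γ} (hx : x ∈ s) (k : ℤ) :
    x ^ k ∈ (s ∪ s⁻¹) ^ k.natAbs := by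
  obtain ⟨n, rfl | rfl⟩ := Int.eq_nat_or_neg k
  · simpa using pow_mem_pow (mem_union_left _ hx)
  · simpa [zpow_neg, ← inv_pow] using pow_mem_pow (mem_union_right s (inv_mem_inv.2 hx))

lemma prod_zpow_mem_union_inv_pow {s : Set Γ} (l : List (Γ × ℤ)) (hl : ∀ p ∈ l, p.1 ∈ s) :
    (l.map fun p => p.1 ^ p.2).prod ∈ (s ∪ s⁻¹) ^ (l.map fun p => p.2.natAbs).sum := by
  induction l with
  | nil => simp
  | cons p l ih =>
    simp only [List.map_cons, List.prod_cons, List.sum_cons, pow_add]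
    exact mul_mem_mul (zpow_mem_union_inv_pow_natAbs (hl p (by simp)) _)
      (ih fun q hq => hl q (by simp [hq]))

section WordNorm

variable (S : Finset Γ)

lemma exists_list_zpow_prod_eq (hS : Subgroup.closure (S : Set Γ) = ⊤) (γ : Γ) :
    ∃ l : List (Γ × ℤ), (∀ p ∈ l, p.1 ∈ S) ∧ (l.map fun p => p.1 ^ p.2).prod = γ := by
  classical
  have hγ : γ ∈ Submonoid.closure ((S : Set Γ) ∪ (S : Set Γ)⁻¹) := by
    rw [← Subgroup.closure_toSubmonoid, hS]; trivial
  obtain ⟨l, hl, rfl⟩ := Submonoid.exists_list_of_mem_closure hγ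
  refine ⟨l.map fun x => if x ∈ S then (x, 1) else (x⁻¹, -1), ?_, ?_⟩
  · simp only [List.mem_map]
    rintro _ ⟨x, hx, rfl⟩
    split_ifs with h
    · exact h
    · simpa [h] using hl x hx
  · conv_rhs => rw [← List.map_id l]
    rw [List.map_map]
    refine congrArg List.prod (List.map_congr_left fun x _ => ?_)
    by_cases h : x ∈ S <;> simp [h]

lemma exists_minimal_list_zpow_prod_eq (hS : Subgroup.closure (S : Set Γ) = ⊤) (γ : Γ) :
    ∃ l : List (Γ × ℤ), (∀ p ∈ l, p.1 ∈ S) ∧ (l.map fun p => p.1 ^ p.2).prod = γ ∧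
      (l.map fun p => p.2.natAbs).sum = wordNorm S γ := by
  obtain ⟨l, hl, hprod⟩ := exists_list_zpow_prod_eq S hS γ
  exact Nat.sInf_mem (s := {n | ∃ l : List (Γ × ℤ), (∀ p ∈ l, p.1 ∈ S) ∧
    (l.map fun p => p.1 ^ p.2).prod = γ ∧ (l.map fun p => p.2.natAbs).sum = n})
    ⟨_, l, hl, hprod, rfl⟩

lemma finite_setOf_wordNorm_le (hS : Subgroup.closure (S : Set Γ) = ⊤) (n : ℕ) :
    {γ | wordNorm S γ ≤ n}.Finite := by
  classical
  refine ((finite_Iic n).biUnion fun m _ => ((S ∪ S⁻¹) ^ m : Finset Γ).finite_toSet).subset ?_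
  intro γ hγ
  obtain ⟨l, hl, hprod, hsum⟩ := exists_minimal_list_zpow_prod_eq S hS γ
  refine mem_biUnion (x := wordNorm S γ) hγ ?_
  rw [Finset.coe_pow, Finset.coe_union, Finset.coe_inv, ← hsum, ← hprod]
  exact prod_zpow_mem_union_inv_pow l hl

lemma wordBall_one (r : ℝ) : wordBall S 1 r = {γ | (wordNorm S γ : ℝ) ≤ r}⁻¹ := by
  ext; simp [wordBall]

lemma wordBall_eq_image_mul_right (x : Γ) (r : ℝ) :
    wordBall S x r = (· * x) '' wordBall S 1 r := by
  rw [image_mul_right]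
  ext y
  simp [wordBall]

lemma finite_wordBall (hS : Subgroup.closure (S : Set Γ) = ⊤) (x : Γ) (r : ℝ) :
    (wordBall S x r).Finite := by
  rw [wordBall_eq_image_mul_right, wordBall_one]
  exact ((finite_setOf_wordNorm_le S hS ⌊r⌋₊).subset fun γ hγ => Nat.le_floor hγ).inv.image _

lemma ncard_wordBall (x : Γ) {r : ℝ} (hr : 0 ≤ r) :
    (wordBall S x r).ncard = (wordBall S 1 (⌊r⌋₊ : ℝ)).ncard := by
  rw [wordBall_eq_image_mul_right, ncard_image_of_injective _ (mul_left_injective x),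
    wordBall_one, wordBall_one]
  congr 2
  ext γ
  simp only [mem_ofPred_eq, Nat.cast_le, Nat.le_floor_iff hr]

end WordNorm

lemma tendsto_comp_floor_div_pow {a : ℕ → ℝ} {d : ℕ} {c : ℝ}
    (ha : Tendsto (fun n : ℕ => a n / (n : ℝ) ^ d) atTop (𝓝 c)) :
    Tendsto (fun t : ℝ => a ⌊t⌋₊ / t ^ d) atTop (𝓝 c) := by
  have h := (ha.comp tendsto_nat_floor_atTop).mul (tendsto_nat_floor_div_atTop.pow d)
  rw [one_pow, mul_one] at h
  refine h.congr' ?_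
  filter_upwards [eventually_ge_atTop 1] with t ht
  have : (⌊t⌋₊ : ℝ) ≠ 0 := by exact_mod_cast (Nat.floor_pos.2 ht).ne'
  simp only [comp_apply, div_pow]
  field_simp

lemma exists_mul_le_of_tendsto_div_pow {g : ℝ → ℝ} {d : ℕ} {c : ℝ} (hc : 0 < c)
    (hg : Tendsto (fun t => g t / t ^ d) atTop (𝓝 c)) {δ : ℝ} (hδ₀ : 0 < δ) (hδ₁ : δ ≤ 1) :
    ∃ ε > 0, ∃ T, ∀ s t, T ≤ s → s ≤ t → t ≤ (1 + ε) * s → (1 - δ) * g t ≤ g s := by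
  obtain ⟨ε, hε, hq⟩ : ∃ ε > 0, (1 - δ) * (1 + ε) ^ d < 1 := by
    have : Tendsto (fun ε : ℝ => (1 - δ) * (1 + ε) ^ d) (𝓝[>] 0) (𝓝 (1 - δ)) := by
      have hcont : Continuous fun ε : ℝ => (1 - δ) * (1 + ε) ^ d := by fun_prop
      simpa using (hcont.tendsto 0).mono_left nhdsWithin_le_nhds
    obtain ⟨ε, h, hε⟩ :=
      ((this.eventually_lt_const (by linarith : 1 - δ < 1)).and self_mem_nhdsWithin).exists
    exact ⟨ε, hε, h⟩
  set q := (1 - δ) * (1 + ε) ^ d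
  set η := c * (1 - q) / 2
  have hη : 0 < η := by
    have : 0 < 1 - q := by linarith
    positivity
  obtain ⟨T, hT⟩ := eventually_atTop.1 (hg.eventually (Ioo_mem_nhds (by linarith : c - η < c)
    (by linarith : c < c + η)))
  refine ⟨ε, hε, max T 1, fun s t hs hst hts => ?_⟩
  have hs₀ : 0 < s := by linarith [le_max_right T 1]
  have ht₀ : 0 < t := hs₀.trans_le hst
  have hgs : (c - η) * s ^ d ≤ g s :=
    ((lt_div_iff₀ (by positivity)).1 (hT s (le_of_max_le_left hs)).1).le
  have hgt : g t ≤ (c + η) * t ^ d :=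
    ((div_lt_iff₀ (by positivity)).1 (hT t (le_of_max_le_left (hs.trans hst))).2).le
  have hpow : t ^ d ≤ (1 + ε) ^ d * s ^ d := by
    rw [← mul_pow]
    exact pow_le_pow_left₀ (by linarith) hts d
  have hmargin : q * (c + η) ≤ c - η := by
    have : c - η - q * (c + η) = c * (1 - q) ^ 2 / 2 := by ring
    linarith [(by positivity : 0 ≤ c * (1 - q) ^ 2 / 2)]
  calc (1 - δ) * g t ≤ (1 - δ) * ((c + η) * ((1 + ε) ^ d * s ^ d)) :=
        mul_le_mul_of_nonneg_left (hgt.trans (by gcongr)) (by linarith)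
    _ = q * (c + η) * s ^ d := by ring
    _ ≤ (c - η) * s ^ d := by gcongr
    _ ≤ g s := hgs

lemma mul_ncard_iUnion_le_of_pairwise_disjoint {ι α : Type*} [Fintype ι] {A B : ι → Set α}
    (hA : ∀ i, (A i).Finite) (hdisj : Pairwise (Disjoint on A)) {κ : ℝ} (hκ : 0 ≤ κ)
    (h : ∀ i, κ * (B i).ncard ≤ (A i).ncard) :
    κ * (⋃ i, B i).ncard ≤ (⋃ i, A i).ncard := by
  rw [ncard_iUnion_of_finite hA hdisj, finsum_eq_sum_of_fintype]
  calc κ * ((⋃ i, B i).ncard : ℝ) ≤ κ * ∑ i, ((B i).ncard : ℝ) := by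
        gcongr
        exact_mod_cast ncard_iUnion_le_of_fintype B
    _ = ∑ i, κ * ((B i).ncard : ℝ) := Finset.mul_sum _ _ _
    _ ≤ ∑ i, ((A i).ncard : ℝ) := Finset.sum_le_sum fun i _ => h i
    _ = _ := by push_cast; rfl

/-- For large balls and large `r`, a disjoint collection of balls occupies at least a
`(1-δ)`-fraction of the union of its `(1+4/(r-2))`-enlargements. -/
theorem small_enlargement (S : Finset Γ) (hS : Subgroup.closure (S : Set Γ) = ⊤)
    (d : ℕ) (cΓ : ℝ) (hc : 0 < cΓ)
    (hP : Tendsto (fun n : ℕ => ((wordBall S 1 (n : ℝ)).ncard : ℝ) / (n : ℝ) ^ d)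
      atTop (nhds cΓ))
    (δ : ℝ) (hδ : δ ∈ Set.Ioo (0 : ℝ) 1) :
    ∃ n₀ r₀ : ℕ, 2 < n₀ ∧ 2 < r₀ ∧ ∀ (k : ℕ) (y : Fin k → Γ) (s : Fin k → ℝ),
      (∀ i, (n₀ : ℝ) < s i) →
      Pairwise (Function.onFun Disjoint fun i => wordBall S (y i) (s i)) →
      ∀ r : ℝ, (r₀ : ℝ) ≤ r →
      (1 - δ) * ((⋃ i, wordBall S (y i) ((1 + 4 / (r - 2)) * s i)).ncard : ℝ) ≤
        ((⋃ i, wordBall S (y i) (s i)).ncard : ℝ) := by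
  obtain ⟨ε, hε, T, hT⟩ :=
    exists_mul_le_of_tendsto_div_pow hc (tendsto_comp_floor_div_pow hP) hδ.1 hδ.2.le
  refine ⟨max 3 ⌈T⌉₊, max 3 ⌈2 + 4 / ε⌉₊, by omega, by omega,
    fun k y s hs hdisj r hr => ?_⟩
  have hr₀ : 2 + 4 / ε ≤ r := (Nat.le_ceil _).trans ((Nat.cast_le.2 (le_max_right _ _)).trans hr)
  have hr₂ : 0 < r - 2 := by linarith [div_pos four_pos hε]
  have hfac : 1 ≤ 1 + 4 / (r - 2) := by linarith [div_pos four_pos hr₂]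
  have hfacε : 4 / (r - 2) ≤ ε := by
    rw [div_le_iff₀ hr₂, mul_comm, ← div_le_iff₀ hε]
    linarith
  refine mul_ncard_iUnion_le_of_pairwise_disjoint (fun i => finite_wordBall S hS _ _) hdisj
    (by linarith [hδ.2]) fun i => ?_
  have hTs : T ≤ s i := (Nat.le_ceil T).trans ((Nat.cast_le.2 (le_max_right _ _)).trans (hs i).le)
  have hs₀ : 0 ≤ s i := le_trans (by positivity) (hs i).le
  rw [ncard_wordBall S _ hs₀, ncard_wordBall S _ (by positivity)]
  exact hT _ _ hTs (le_mul_of_one_le_left hs₀ hfac) (by gcongr)
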